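/- arXiv:1905.12718 — 2 statements merged into one kernel-verified Lean document; each statement's English description precedes it below -/
import Mathlib

section
/- Fix α ∈ (0,1), ρ ∈ 𝒞 and P ∈ 𝒫^ρ. Then the order-α M-quantile θ^ρ_α(P) = inf{θ ∈ ℝ : G^ρ(θ) ≥ α} is a real number and is a global minimizer of θ ↦ O^ρ(θ) over ℝ, i.e. O^ρ(θ^ρ_α(P)) ≤ O^ρ(θ) for every θ ∈ ℝ. -/
open MeasureTheory Set Filter

noncomputable section

/-- The class `𝒞` of loss functions: convex, nonnegative, even, vanishing only at `0`. -/
def LossClass (ρ : ℝ → ℝ) : Prop :=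
  ConvexOn ℝ Set.univ ρ ∧ (∀ t, 0 ≤ ρ t) ∧ (∀ t, ρ (-t) = ρ t) ∧ (∀ t, ρ t = 0 ↔ t = 0)

/-- `ψ` is the left-derivative of `ρ`. -/
def IsLeftDeriv (ρ ψ : ℝ → ℝ) : Prop :=
  ∀ x : ℝ, HasDerivWithinAt ρ (ψ x) (Set.Iio x) x

/-- The asymmetric loss `ρ_α(t) = ((1−α)·𝟙[t<0] + α·𝟙[t>0])·ρ(t)`. -/
def rhoA (ρ : ℝ → ℝ) (α t : ℝ) : ℝ :=
  ((1 - α) * (if t < 0 then 1 else 0) + α * (if 0 < t then 1 else 0)) * ρ t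

/-- The objective function `O^ρ(θ) = E[ρ_α(Z−θ) − ρ_α(Z)]`. -/
def Obj (ρ : ℝ → ℝ) (α : ℝ) (P : Measure ℝ) (θ : ℝ) : ℝ :=
  ∫ z, (rhoA ρ α (z - θ) - rhoA ρ α z) ∂P

/-- `G^ρ(θ) = E[|ψ₋(Z−θ)|·𝟙[Z ≤ θ]] / E[|ψ₋(Z−θ)|]`. -/
def Gfun (ψ : ℝ → ℝ) (P : Measure ℝ) (θ : ℝ) : ℝ :=
  (∫ z, |ψ (z - θ)| * (if z ≤ θ then 1 else 0) ∂P) / ∫ z, |ψ (z - θ)| ∂P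

/-- The order-`α` M-quantile `θ^ρ_α(P) = inf{θ : G^ρ(θ) ≥ α}`. -/
def MQuant (ψ : ℝ → ℝ) (P : Measure ℝ) (α : ℝ) : ℝ :=
  sInf {θ : ℝ | α ≤ Gfun ψ P θ}

open Topology

/-!
The objective `O^ρ` admits the subgradient `g(θ) = E[-ψ_α(Z - θ)]`, where `ψ_α` weights `ψ` like
`ρ_α` weights `ρ`; so `O^ρ` is convex, hence continuous, and since `E|ψ(Z - θ)| > 0`,
`G^ρ(θ) ≥ α` says exactly `g(θ) ≥ 0`. The inequality `O(θ) ≥ O(t) + (θ - t) g(t)` gives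
`O(t) ≤ O(θ)` both for `t ≤ θ` with `g(t) ≥ 0` and for `θ ≤ t` with `g(t) < 0`; points of one
of the two kinds accumulate at `inf {g ≥ 0}` from the side of `θ`, and continuity carries the
bound to the infimum. The set `{g ≥ 0}` is nonempty and bounded below because, by dominated
convergence, `E[ψ_α(Z - θ)]` eventually has the sign of `ψ_α(-1) < 0` as `θ → ∞` and that of
`ψ_α(1) > 0` as `θ → -∞`.
-/

def IsSubgradient (f g : ℝ → ℝ) : Prop :=
  ∀ x y, f x + g x * (y - x) ≤ f y

theorem ConvexOn.isSubgradient_of_hasDerivWithinAt_Iio {f g : ℝ → ℝ}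
    (hf : ConvexOn ℝ univ f) (hg : ∀ x, HasDerivWithinAt f (g x) (Iio x) x) :
    IsSubgradient f g := by
  intro x y
  rcases lt_trichotomy y x with hyx | rfl | hxy
  · have h := hf.slope_le_of_hasDerivWithinAt_Iio trivial trivial hyx (hg x)
    rw [slope_def_field, div_le_iff₀ (sub_pos.2 hyx)] at h
    linarith
  · simp
  · have h := (hf.leftDeriv_le_rightDeriv_of_mem_interior (by simp)).trans
      (hf.rightDeriv_le_slope_of_mem_interior (by simp) trivial hxy)
    rw [(hg x).derivWithin (uniqueDiffWithinAt_Iio x), slope_def_field,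
      le_div_iff₀ (sub_pos.2 hxy)] at h
    linarith

theorem HasDerivWithinAt.nonpos_of_forall_lt_le {f : ℝ → ℝ} {f' x : ℝ}
    (hf : HasDerivWithinAt f f' (Iio x) x) (hmin : ∀ y < x, f x ≤ f y) : f' ≤ 0 := by
  refine le_of_tendsto ((hasDerivWithinAt_iff_tendsto_slope' self_notMem_Iio).mp hf) ?_
  filter_upwards [self_mem_nhdsWithin] with y (hy : y < x)
  rw [slope_def_field]
  exact div_nonpos_of_nonneg_of_nonpos (sub_nonneg.2 (hmin y hy)) (sub_nonpos.2 hy.le)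

namespace IsSubgradient

variable {f g : ℝ → ℝ}

theorem convexOn (h : IsSubgradient f g) : ConvexOn ℝ univ f := by
  refine ⟨convex_univ, fun x _ y _ a b ha hb hab => ?_⟩
  set t := a • x + b • y with ht
  rw [smul_eq_mul, smul_eq_mul] at ht ⊢
  calc f t = a * (f t + g t * (x - t)) + b * (f t + g t * (y - t)) := by
        linear_combination (-(f t) + g t * t) * hab - g t * ht
    _ ≤ a * f x + b * f y := by gcongr <;> exact h t _

theorem continuous (h : IsSubgradient f g) : Continuous f :=
  continuousOn_univ.1 (h.convexOn.continuousOn isOpen_univ)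

theorem monotone (h : IsSubgradient f g) : Monotone g := by
  intro x y hxy
  rcases hxy.eq_or_lt with rfl | hlt
  · rfl
  · nlinarith [h x y, h y x]

theorem abs_sub_le (h : IsSubgradient f g) (x y : ℝ) :
    |f x - f y| ≤ |x - y| * (|g x| + |g y|) := by
  have hx := le_abs_self (g x * (x - y))
  have hy := neg_abs_le (g y * (x - y))
  rw [abs_mul] at hx hy
  rw [abs_le]
  constructor <;> nlinarith [h x y, h y x, abs_nonneg (x - y), abs_nonneg (g x), abs_nonneg (g y)]

theorem integral {Ω : Type*} [MeasurableSpace Ω] {μ : Measure Ω} {F G : ℝ → Ω → ℝ}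
    (hF : ∀ t, Integrable (F t) μ) (hG : ∀ t, Integrable (G t) μ)
    (h : ∀ z, IsSubgradient (F · z) (G · z)) :
    IsSubgradient (fun t => ∫ z, F t z ∂μ) (fun t => ∫ z, G t z ∂μ) := by
  intro x y
  rw [← integral_mul_const, ← integral_add (hF x) ((hG x).mul_const _)]
  exact integral_mono ((hF x).add ((hG x).mul_const _)) (hF y) fun z => h z x y

theorem apply_sInf_le (h : IsSubgradient f g) (hne : {x | 0 ≤ g x}.Nonempty)
    (hbdd : BddBelow {x | 0 ≤ g x}) (y : ℝ) : f (sInf {x | 0 ≤ g x}) ≤ f y := by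
  set m := sInf {x | 0 ≤ g x}
  rcases eq_or_ne y m with rfl | hym
  · rfl
  refine (isClosed_le h.continuous continuous_const).mem_of_frequently_of_tendsto
    (?_ : ∃ᶠ x in 𝓝 m, f x ≤ f y) tendsto_id
  rcases hym.lt_or_gt with hym | hmy
  · have : ∀ᶠ x in 𝓝[<] m, f x ≤ f y := by
      filter_upwards [Ioo_mem_nhdsLT hym] with x ⟨hyx, hxm⟩
      have hgx : g x < 0 := not_le.1 (notMem_of_lt_csInf (s := {x | 0 ≤ g x}) hxm hbdd)
      nlinarith [h x y]
    exact this.frequently.filter_mono nhdsWithin_le_nhds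
  · have hS := (isGLB_csInf hne hbdd).frequently_mem hne
    refine (hS.and_eventually (Ico_mem_nhdsGE hmy)).filter_mono nhdsWithin_le_nhds |>.mono ?_
    rintro x ⟨hgx : 0 ≤ g x, -, hxy⟩
    nlinarith [h x y]

end IsSubgradient

section DominatedConvergence

variable {P : Measure ℝ} [IsProbabilityMeasure P]

theorem Monotone.eventually_integral_comp_sub_neg {φ : ℝ → ℝ} (hφ : Monotone φ)
    (hint : ∀ t, Integrable (fun z => φ (z - t)) P) {u : ℝ} (hu : φ u < 0) :
    ∀ᶠ t in atTop, ∫ z, φ (z - t) ∂P < 0 := by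
  -- `max (φ (z - t)) (φ u)` dominates the integrand and is eventually the constant `φ u`
  have hlim : Tendsto (fun t => ∫ z, max (φ (z - t)) (φ u) ∂P) atTop (𝓝 (φ u)) := by
    have h := tendsto_integral_filter_of_dominated_convergence (μ := P) (l := atTop)
      (F := fun t z => max (φ (z - t)) (φ u)) (f := fun _ => φ u) (fun z => |φ z| + |φ u|)
      (Eventually.of_forall fun t => ((hint t).sup (integrable_const _)).aestronglyMeasurable)
      ((eventually_ge_atTop 0).mono fun t ht => ae_of_all _ fun z => ?_)
      ((by simpa using (hint 0).abs : Integrable (fun z => |φ z|) P).add (integrable_const _))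
      (ae_of_all _ fun z => tendsto_const_nhds.congr' ?_)
    · simpa using h
    · have := hφ (show z - t ≤ z by linarith)
      rw [Real.norm_eq_abs, abs_le]
      constructor
      · linarith [neg_abs_le (φ u), abs_nonneg (φ z), le_max_right (φ (z - t)) (φ u)]
      · exact max_le (by linarith [le_abs_self (φ z), abs_nonneg (φ u)])
          (by linarith [le_abs_self (φ u), abs_nonneg (φ z)])
    · filter_upwards [eventually_ge_atTop (z - u)] with t ht
      exact (max_eq_right (hφ (by linarith))).symm
  filter_upwards [hlim.eventually (gt_mem_nhds hu)] with t ht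
  exact (integral_mono (hint t) ((hint t).sup (integrable_const _))
    fun z => le_max_left _ _).trans_lt ht

theorem Monotone.eventually_integral_comp_sub_pos {φ : ℝ → ℝ} (hφ : Monotone φ)
    (hint : ∀ t, Integrable (fun z => φ (z - t)) P) {u : ℝ} (hu : 0 < φ u) :
    ∀ᶠ t in atBot, 0 < ∫ z, φ (z - t) ∂P := by
  have hlim : Tendsto (fun t => ∫ z, min (φ (z - t)) (φ u) ∂P) atBot (𝓝 (φ u)) := by
    have h := tendsto_integral_filter_of_dominated_convergence (μ := P) (l := atBot)
      (F := fun t z => min (φ (z - t)) (φ u)) (f := fun _ => φ u) (fun z => |φ z| + |φ u|)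
      (Eventually.of_forall fun t => ((hint t).inf (integrable_const _)).aestronglyMeasurable)
      ((eventually_le_atBot 0).mono fun t ht => ae_of_all _ fun z => ?_)
      ((by simpa using (hint 0).abs : Integrable (fun z => |φ z|) P).add (integrable_const _))
      (ae_of_all _ fun z => tendsto_const_nhds.congr' ?_)
    · simpa using h
    · have := hφ (show z ≤ z - t by linarith)
      rw [Real.norm_eq_abs, abs_le]
      constructor
      · exact le_min (by linarith [neg_abs_le (φ z), abs_nonneg (φ u)])
          (by linarith [neg_abs_le (φ u), abs_nonneg (φ z)])
      · linarith [le_abs_self (φ u), abs_nonneg (φ z), min_le_right (φ (z - t)) (φ u)]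
    · filter_upwards [eventually_le_atBot (z - u)] with t ht
      exact (min_eq_right (hφ (by linarith))).symm
  filter_upwards [hlim.eventually (lt_mem_nhds hu)] with t ht
  exact ht.trans_le (integral_mono ((hint t).inf (integrable_const _)) (hint t)
    fun z => min_le_left _ _)

end DominatedConvergence

theorem rhoA_eq {ρ : ℝ → ℝ} (hρ : ρ 0 = 0) (α t : ℝ) :
    rhoA ρ α t = (if t ≤ 0 then 1 - α else α) * ρ t := by
  rcases lt_trichotomy t 0 with h | rfl | h
  · simp [rhoA, h, not_lt.2 h.le, h.le]
  · simp [rhoA, hρ]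
  · simp [rhoA, h, not_lt.2 h.le, not_le.2 h]

def psiA (ψ : ℝ → ℝ) (α u : ℝ) : ℝ :=
  (if u ≤ 0 then 1 - α else α) * ψ u

theorem abs_psiA_le {α : ℝ} (hα : α ∈ Ioo (0 : ℝ) 1) (ψ : ℝ → ℝ) (u : ℝ) :
    |psiA ψ α u| ≤ |ψ u| := by
  obtain ⟨hα0, hα1⟩ := hα
  rw [psiA, abs_mul]
  refine mul_le_of_le_one_left (abs_nonneg _) ?_
  split_ifs <;> rw [abs_of_pos (by linarith)] <;> linarith

namespace LossClass

variable {ρ ψ : ℝ → ℝ} {α : ℝ} {P : Measure ℝ}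

theorem apply_zero (hρ : LossClass ρ) : ρ 0 = 0 :=
  (hρ.2.2.2 0).2 rfl

theorem pos_of_ne_zero (hρ : LossClass ρ) {x : ℝ} (hx : x ≠ 0) : 0 < ρ x :=
  (hρ.2.1 x).lt_of_ne' fun h => hx ((hρ.2.2.2 x).1 h)

theorem isSubgradient (hρ : LossClass ρ) (hψ : IsLeftDeriv ρ ψ) : IsSubgradient ρ ψ :=
  hρ.1.isSubgradient_of_hasDerivWithinAt_Iio hψ

theorem leftDeriv_neg (hρ : LossClass ρ) (hψ : IsLeftDeriv ρ ψ) {x : ℝ} (hx : x < 0) :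
    ψ x < 0 := by
  nlinarith [hρ.isSubgradient hψ x 0, hρ.apply_zero, hρ.pos_of_ne_zero hx.ne]

theorem leftDeriv_pos (hρ : LossClass ρ) (hψ : IsLeftDeriv ρ ψ) {x : ℝ} (hx : 0 < x) :
    0 < ψ x := by
  nlinarith [hρ.isSubgradient hψ x 0, hρ.apply_zero, hρ.pos_of_ne_zero hx.ne']

theorem leftDeriv_nonpos (hρ : LossClass ρ) (hψ : IsLeftDeriv ρ ψ) {x : ℝ} (hx : x ≤ 0) :
    ψ x ≤ 0 := by
  rcases hx.lt_or_eq with hx | rfl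
  · exact (hρ.leftDeriv_neg hψ hx).le
  · exact (hψ 0).nonpos_of_forall_lt_le fun y _ => by rw [hρ.apply_zero]; exact hρ.2.1 y

theorem isSubgradient_rhoA (hρ : LossClass ρ) (hψ : IsLeftDeriv ρ ψ) (hα : α ∈ Ioo (0 : ℝ) 1) :
    IsSubgradient (rhoA ρ α) (psiA ψ α) := by
  obtain ⟨hα0, hα1⟩ := hα
  have hsub := hρ.isSubgradient hψ
  -- across `0` the tangent line of `ρ` at `x` is already nonpositive at `y`
  have hcross : ∀ x y, (x ≤ 0 ↔ 0 < y) → ρ x + ψ x * (y - x) ≤ 0 := by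
    intro x y hxy
    have hx0 := hsub x 0
    rw [hρ.apply_zero] at hx0
    by_cases hx : x ≤ 0
    · nlinarith [hρ.leftDeriv_nonpos hψ hx, hxy.1 hx]
    · nlinarith [hρ.leftDeriv_pos hψ (not_le.1 hx), not_lt.1 (mt hxy.2 hx)]
  intro x y
  simp only [rhoA_eq hρ.apply_zero, psiA]
  split_ifs with hx hy hy
  · nlinarith [hsub x y]
  · nlinarith [hcross x y (by simp [hx, not_le.1 hy]), hρ.2.1 y]
  · nlinarith [hcross x y (by simp [hx, hy]), hρ.2.1 y]
  · nlinarith [hsub x y]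

theorem neg_psiA_eq (hρ : LossClass ρ) (hψ : IsLeftDeriv ρ ψ) (α z t : ℝ) :
    -psiA ψ α (z - t) = |ψ (z - t)| * (if z ≤ t then 1 else 0) - α * |ψ (z - t)| := by
  rw [psiA]
  by_cases h : z ≤ t
  · rw [if_pos (sub_nonpos.2 h), if_pos h, abs_of_nonpos (hρ.leftDeriv_nonpos hψ (sub_nonpos.2 h))]
    ring
  · rw [if_neg (by linarith), if_neg h, abs_of_pos (hρ.leftDeriv_pos hψ (by linarith))]
    ring

theorem integrable_psiA (hρ : LossClass ρ) (hψ : IsLeftDeriv ρ ψ) (hα : α ∈ Ioo (0 : ℝ) 1)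
    (hP2 : ∀ θ : ℝ, Integrable (fun z => |ψ (z - θ)|) P) (t : ℝ) :
    Integrable (fun z => psiA ψ α (z - t)) P :=
  (hP2 t).mono' ((hρ.isSubgradient_rhoA hψ hα).monotone.measurable.comp
    (measurable_sub_const t)).aestronglyMeasurable (ae_of_all _ fun _ => abs_psiA_le hα ψ _)

theorem integrable_rhoA_sub (hρ : LossClass ρ) (hψ : IsLeftDeriv ρ ψ) (hα : α ∈ Ioo (0 : ℝ) 1)
    (hP2 : ∀ θ : ℝ, Integrable (fun z => |ψ (z - θ)|) P) (θ : ℝ) :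
    Integrable (fun z => rhoA ρ α (z - θ) - rhoA ρ α z) P := by
  have hsub := hρ.isSubgradient_rhoA hψ hα
  refine (((hP2 θ).add (hP2 0)).const_mul |θ|).mono'
    ((hsub.continuous.comp (continuous_sub_right θ)).sub hsub.continuous).aestronglyMeasurable
    (ae_of_all _ fun z => ?_)
  calc ‖rhoA ρ α (z - θ) - rhoA ρ α z‖
      ≤ |z - θ - z| * (|psiA ψ α (z - θ)| + |psiA ψ α z|) := hsub.abs_sub_le _ _
    _ ≤ |θ| * (|ψ (z - θ)| + |ψ (z - 0)|) := by
      rw [sub_sub_cancel_left, abs_neg, sub_zero]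
      exact mul_le_mul_of_nonneg_left
        (add_le_add (abs_psiA_le hα ψ _) (abs_psiA_le hα ψ _)) (abs_nonneg θ)

theorem isSubgradient_obj (hρ : LossClass ρ) (hψ : IsLeftDeriv ρ ψ) (hα : α ∈ Ioo (0 : ℝ) 1)
    (hP2 : ∀ θ : ℝ, Integrable (fun z => |ψ (z - θ)|) P) :
    IsSubgradient (Obj ρ α P) (fun t => ∫ z, -psiA ψ α (z - t) ∂P) :=
  IsSubgradient.integral (hρ.integrable_rhoA_sub hψ hα hP2)
    (fun t => (hρ.integrable_psiA hψ hα hP2 t).neg) fun z x y => by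
      have h := hρ.isSubgradient_rhoA hψ hα (z - x) (z - y)
      have hlin : psiA ψ α (z - x) * (z - y - (z - x)) = -psiA ψ α (z - x) * (y - x) := by ring
      dsimp only
      linarith

theorem integral_abs_leftDeriv_pos [IsProbabilityMeasure P] (hρ : LossClass ρ)
    (hψ : IsLeftDeriv ρ ψ) (hP1 : ∀ θ : ℝ, P {θ} < 1)
    (hP2 : ∀ θ : ℝ, Integrable (fun z => |ψ (z - θ)|) P) (θ : ℝ) :
    0 < ∫ z, |ψ (z - θ)| ∂P := by
  rw [integral_pos_iff_support_of_nonneg (fun z => abs_nonneg _) (hP2 θ)]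
  have hsupp : ({θ}ᶜ : Set ℝ) ⊆ Function.support fun z => |ψ (z - θ)| := by
    intro z hz
    rw [Function.mem_support, abs_ne_zero]
    rcases (sub_ne_zero.2 hz).lt_or_gt with h | h
    · exact (hρ.leftDeriv_neg hψ h).ne
    · exact (hρ.leftDeriv_pos hψ h).ne'
  refine lt_of_lt_of_le ?_ (measure_mono hsupp)
  rw [prob_compl_eq_one_sub (measurableSet_singleton θ)]
  exact tsub_pos_iff_lt.2 (hP1 θ)

theorem le_Gfun_iff [IsProbabilityMeasure P] (hρ : LossClass ρ) (hψ : IsLeftDeriv ρ ψ)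
    (hP1 : ∀ θ : ℝ, P {θ} < 1) (hP2 : ∀ θ : ℝ, Integrable (fun z => |ψ (z - θ)|) P) (θ : ℝ) :
    α ≤ Gfun ψ P θ ↔ 0 ≤ ∫ z, -psiA ψ α (z - θ) ∂P := by
  have hnum : Integrable (fun z => |ψ (z - θ)| * (if z ≤ θ then 1 else 0)) P :=
    (hP2 θ).mono ((hρ.isSubgradient hψ).monotone.measurable.comp (measurable_sub_const θ)
      |>.abs.mul (measurable_const.ite measurableSet_Iic measurable_const)).aestronglyMeasurable
      (ae_of_all _ fun z => by split_ifs <;> simp)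
  simp_rw [Gfun, le_div_iff₀ (hρ.integral_abs_leftDeriv_pos hψ hP1 hP2 θ),
    hρ.neg_psiA_eq hψ, integral_sub hnum ((hP2 θ).const_mul α), integral_const_mul, sub_nonneg]

end LossClass

theorem stmt_3 (α : ℝ) (hα : α ∈ Set.Ioo (0 : ℝ) 1)
    (ρ ψ : ℝ → ℝ) (hρ : LossClass ρ) (hψ : IsLeftDeriv ρ ψ)
    (P : Measure ℝ) [IsProbabilityMeasure P]
    (hP1 : ∀ θ : ℝ, P {θ} < 1)
    (hP2 : ∀ θ : ℝ, Integrable (fun z => |ψ (z - θ)|) P) :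
    {θ : ℝ | α ≤ Gfun ψ P θ}.Nonempty ∧
    BddBelow {θ : ℝ | α ≤ Gfun ψ P θ} ∧
    (∀ θ : ℝ, Obj ρ α P (MQuant ψ P α) ≤ Obj ρ α P θ) := by
  have hS : {θ : ℝ | α ≤ Gfun ψ P θ} = {t | 0 ≤ ∫ z, -psiA ψ α (z - t) ∂P} :=
    Set.ext fun θ => hρ.le_Gfun_iff hψ hP1 hP2 θ
  have hmono := (hρ.isSubgradient_rhoA hψ hα).monotone
  have hint := hρ.integrable_psiA hψ hα hP2
  have hneg : psiA ψ α (-1) < 0 := by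
    rw [psiA, if_pos (by norm_num)]
    exact mul_neg_of_pos_of_neg (sub_pos.2 hα.2) (hρ.leftDeriv_neg hψ (by norm_num))
  have hpos : 0 < psiA ψ α 1 := by
    rw [psiA, if_neg (by norm_num)]
    exact mul_pos hα.1 (hρ.leftDeriv_pos hψ (by norm_num))
  have hne : {θ : ℝ | α ≤ Gfun ψ P θ}.Nonempty := by
    obtain ⟨t, ht⟩ := (hmono.eventually_integral_comp_sub_neg hint hneg).exists
    exact ⟨t, by rw [hS, mem_ofPred_eq, integral_neg]; linarith⟩
  have hbdd : BddBelow {θ : ℝ | α ≤ Gfun ψ P θ} := by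
    obtain ⟨t₀, ht₀⟩ := eventually_atBot.1 (hmono.eventually_integral_comp_sub_pos hint hpos)
    refine ⟨t₀, fun θ hθ => le_of_not_ge fun hθt => ?_⟩
    rw [hS, mem_ofPred_eq, integral_neg] at hθ
    linarith [ht₀ θ hθt]
  refine ⟨hne, hbdd, fun θ => ?_⟩
  rw [hS] at hne hbdd
  rw [MQuant, hS]
  exact (hρ.isSubgradient_obj hψ hα hP2).apply_sInf_le hne hbdd θ
end
end

section
/- Fix P ∈ 𝒫_d. Then (i) the map z ↦ ED(z,P) is uniformly continuous on ℝ^d; (ii) when d = 1, the map z ↦ ED(z,P) is left-differentiable and right-differentiable at every point of ℝ. -/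
/-!
For a unit vector `u`, the outlyingness `eOut P z u` is the ratio `N / D` of
`N z = ∫ ⟪u, y - z⟫⁻` and `D z = ∫ |⟪u, y - z⟫|`, two `1`-Lipschitz functions of `z` with
`0 ≤ N ≤ D`. Since `∫ |X - E X| ≤ 2 ∫ |X - c|` for every `c`, `D` is at least half the mean
absolute deviation of `⟪u, Z⟫`, a continuous function of `u` that is positive on the compact unit
sphere because `P` charges no hyperplane. So `D` is bounded below uniformly in `z` and `u`, all
the ratios are Lipschitz with a common constant, and so is their infimum `ED(·, P)`.

On the line the unit sphere is `{1, -1}`, so `ED(t, Q) = min (A t) (B t) / D t` with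
`A t = ∫ (y - t)⁻` and `B t = ∫ (y - t)⁺`. As `A t - B t = t - E Z`, the minimum is
`A t - (E Z - t)⁻`, a difference of convex functions of `t`; convex functions have one-sided
derivatives everywhere, and `D` is convex and positive.
-/

open MeasureTheory Set Filter
open scoped RealInnerProductSpace ENNReal

noncomputable section

/-- The directional expectile outlyingness
`e_z(u) = E[|u'(Z−z)|·𝟙[u'(Z−z) ≤ 0]] / E[|u'(Z−z)|]` for `Z ~ P`. -/
def eOut {E : Type*} [NormedAddCommGroup E] [InnerProductSpace ℝ E] [MeasurableSpace E]
    (P : Measure E) (z u : E) : ℝ :=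
  (∫ y, |⟪u, y - z⟫| * (if ⟪u, y - z⟫ ≤ 0 then 1 else 0) ∂P) / ∫ y, |⟪u, y - z⟫| ∂P

/-- The halfspace expectile depth `ED(z,P) = inf_{u ∈ S^{d−1}} e_z(u)`. -/
def EDepth {E : Type*} [NormedAddCommGroup E] [InnerProductSpace ℝ E] [MeasurableSpace E]
    (P : Measure E) (z : E) : ℝ :=
  ⨅ u : {u : E // ‖u‖ = 1}, eOut P z u.1

/-- The C-support `C_P = {z : P[{y : u'y ≤ u'z}] > 0 for every unit u}`. -/
def Csupport {E : Type*} [NormedAddCommGroup E] [InnerProductSpace ℝ E] [MeasurableSpace E]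
    (P : Measure E) : Set E :=
  {z | ∀ u : E, ‖u‖ = 1 → 0 < P {y | ⟪u, y⟫ ≤ ⟪u, z⟫}}

open scoped NNReal

theorem LipschitzWith.ciInf {X ι : Type*} [PseudoMetricSpace X] {f : ι → X → ℝ} {K : ℝ≥0}
    (hf : ∀ i, LipschitzWith K (f i)) (hbdd : ∀ x, BddBelow (range fun i => f i x)) :
    LipschitzWith K (fun x => ⨅ i, f i x) := by
  rcases isEmpty_or_nonempty ι with _ | _
  · simpa only [Real.iInf_of_isEmpty] using LipschitzWith.const' (α := X) (0 : ℝ) (K := K)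
  refine LipschitzWith.of_le_add_mul K fun x y => ?_
  rw [← sub_le_iff_le_add]
  refine le_ciInf fun i => ?_
  rw [sub_le_iff_le_add]
  exact (ciInf_le (hbdd x) i).trans ((hf i).le_add_mul x y)

theorem LipschitzWith.div_of_nonneg_of_le {X : Type*} [PseudoMetricSpace X] {n d : X → ℝ}
    {K δ : ℝ≥0} (hn : LipschitzWith K n) (hd : LipschitzWith K d) (hn0 : ∀ x, 0 ≤ n x)
    (hnd : ∀ x, n x ≤ d x) (hδ : 0 < δ) (hdδ : ∀ x, δ ≤ d x) :
    LipschitzWith (2 * K / δ) (fun x => n x / d x) := by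
  refine LipschitzWith.of_dist_le_mul fun x x' => ?_
  have hdx : 0 < d x := (NNReal.coe_pos.mpr hδ).trans_le (hdδ x)
  have hdx' : 0 < d x' := (NNReal.coe_pos.mpr hδ).trans_le (hdδ x')
  have hnum := hn.dist_le_mul x x'
  have hden := hd.dist_le_mul x x'
  rw [Real.dist_eq] at hnum hden ⊢
  have hsplit : n x / d x - n x' / d x' =
      ((n x - n x') * d x' + n x' * (d x' - d x)) / (d x * d x') := by
    field_simp
    ring
  rw [hsplit, abs_div, abs_of_pos (mul_pos hdx hdx'), div_le_iff₀ (mul_pos hdx hdx')]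
  calc |(n x - n x') * d x' + n x' * (d x' - d x)|
      ≤ |n x - n x'| * d x' + d x' * |d x - d x'| := by
        refine (abs_add_le _ _).trans (add_le_add ?_ ?_)
        · rw [abs_mul, abs_of_pos hdx']
        · rw [abs_mul, abs_of_nonneg (hn0 x'), abs_sub_comm]
          exact mul_le_mul_of_nonneg_right (hnd x') (abs_nonneg _)
    _ ≤ K * dist x x' * d x' + d x' * (K * dist x x') := by gcongr
    _ = 2 * K / d x * dist x x' * (d x * d x') := by
        field_simp
        ring
    _ ≤ ↑(2 * K / δ) * dist x x' * (d x * d x') := by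
        push_cast
        gcongr
        exact hdδ x

section RealIntegral

variable {α : Type*} [MeasurableSpace α] {μ : Measure α}

theorem lipschitzWith_integral {X : Type*} [PseudoMetricSpace X] {F : X → α → ℝ} {G : α → ℝ}
    (hF : ∀ x, Integrable (F x) μ) (hG : Integrable G μ)
    (hFG : ∀ x x' a, |F x a - F x' a| ≤ G a * dist x x') :
    LipschitzWith (∫ a, G a ∂μ).toNNReal (fun x => ∫ a, F x a ∂μ) := by
  refine LipschitzWith.of_dist_le' fun x x' => ?_
  rw [dist_eq_norm, ← integral_sub (hF x) (hF x'), ← integral_mul_const]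
  exact norm_integral_le_of_norm_le (hG.mul_const _) (ae_of_all _ fun a => hFG x x' a)

theorem integral_abs_sub_const_pos [IsProbabilityMeasure μ] {f : α → ℝ} (hf : Integrable f μ)
    {c : ℝ} (hfc : μ {x | f x = c} < 1) : 0 < ∫ x, |f x - c| ∂μ := by
  refine (integral_nonneg fun x => abs_nonneg _).lt_of_ne fun h => hfc.ne ?_
  have hint : Integrable (fun x => |f x - c|) μ := (hf.sub (integrable_const c)).abs
  have hae : ∀ᵐ x ∂μ, f x = c := by
    filter_upwards [(integral_eq_zero_iff_of_nonneg (fun x => abs_nonneg _) hint).mp h.symm]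
      with x hx
    exact sub_eq_zero.mp (abs_eq_zero.mp hx)
  rw [measure_congr (ae_eq_univ.mpr hae), measure_univ]

theorem integral_abs_sub_integral_le [IsProbabilityMeasure μ] {f : α → ℝ} (hf : Integrable f μ)
    (c : ℝ) : ∫ x, |f x - ∫ y, f y ∂μ| ∂μ ≤ 2 * ∫ x, |f x - c| ∂μ := by
  have hint : Integrable (fun x => |f x - c|) μ := (hf.sub (integrable_const c)).abs
  have hmean : |c - ∫ y, f y ∂μ| ≤ ∫ x, |f x - c| ∂μ := by
    have hsub : (∫ y, f y ∂μ) - c = ∫ x, (f x - c) ∂μ := by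
      rw [integral_sub hf (integrable_const c), integral_const, probReal_univ, one_smul]
    rw [abs_sub_comm, hsub]
    exact abs_integral_le_integral_abs
  calc ∫ x, |f x - ∫ y, f y ∂μ| ∂μ ≤ ∫ x, (|f x - c| + |c - ∫ y, f y ∂μ|) ∂μ :=
        integral_mono (hf.sub (integrable_const _)).abs (hint.add (integrable_const _))
          fun x => abs_sub_le _ _ _
    _ = ∫ x, |f x - c| ∂μ + |c - ∫ y, f y ∂μ| := by
        rw [integral_add hint (integrable_const _), integral_const, probReal_univ, one_smul]
    _ ≤ 2 * ∫ x, |f x - c| ∂μ := by linarith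

end RealIntegral

theorem lipschitzWith_inner_sub {E : Type*} [NormedAddCommGroup E] [InnerProductSpace ℝ E] {u : E}
    (hu : ‖u‖ = 1) (y : E) : LipschitzWith 1 (fun z => ⟪u, y - z⟫) :=
  LipschitzWith.of_dist_le_mul fun z z' => by
    rw [Real.dist_eq, ← inner_sub_right, sub_sub_sub_cancel_left, dist_comm, dist_eq_norm,
      NNReal.coe_one, ← hu]
    exact abs_real_inner_le_norm _ _

section Outlyingness

variable {E : Type*} [NormedAddCommGroup E] [InnerProductSpace ℝ E] [MeasurableSpace E]

theorem abs_mul_ite_nonpos (r : ℝ) : |r| * (if r ≤ 0 then 1 else 0) = r⁻ := by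
  split_ifs with h
  · rw [mul_one, abs_of_nonpos h, negPart_eq_neg.mpr h]
  · rw [mul_zero, negPart_eq_zero.mpr (not_le.mp h).le]

theorem eOut_eq (P : Measure E) (z u : E) :
    eOut P z u = (∫ y, ⟪u, y - z⟫⁻ ∂P) / ∫ y, |⟪u, y - z⟫| ∂P := by
  simp only [eOut, abs_mul_ite_nonpos]

theorem eOut_nonneg (P : Measure E) (z u : E) : 0 ≤ eOut P z u := by
  rw [eOut_eq]
  exact div_nonneg (integral_nonneg fun _ => negPart_nonneg _)
    (integral_nonneg fun _ => abs_nonneg _)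

variable {P : Measure E} [IsProbabilityMeasure P]

theorem integrable_comp_inner_sub {φ : ℝ → ℝ} {K : ℝ≥0} (hφ : LipschitzWith K φ) (hφ0 : φ 0 = 0)
    (hP : Integrable (fun y : E => y) P) (u z : E) : Integrable (fun y => φ ⟪u, y - z⟫) P :=
  (hφ.comp_memLp hφ0 (memLp_one_iff_integrable.mpr
    ((hP.sub (integrable_const z)).const_inner u))).integrable le_rfl

theorem lipschitzWith_integral_comp_inner_sub {φ : ℝ → ℝ} (hφ : LipschitzWith 1 φ) (hφ0 : φ 0 = 0)
    (hP : Integrable (fun y : E => y) P) {u : E} (hu : ‖u‖ = 1) :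
    LipschitzWith 1 (fun z => ∫ y, φ ⟪u, y - z⟫ ∂P) := by
  simpa using lipschitzWith_integral (integrable_comp_inner_sub hφ hφ0 hP u)
    (integrable_const (1 : ℝ)) fun z z' y => by
      simpa [Real.dist_eq] using (hφ.comp (lipschitzWith_inner_sub hu y)).dist_le_mul z z'

theorem exists_pos_le_integral_abs_inner_sub [FiniteDimensional ℝ E]
    (hP : Integrable (fun y : E => y) P)
    (hP1 : ∀ u : E, ‖u‖ = 1 → ∀ c : ℝ, P {y | ⟪u, y⟫ = c} < 1) :
    ∃ δ > 0, ∀ z u : E, ‖u‖ = 1 → δ ≤ ∫ y, |⟪u, y - z⟫| ∂P := by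
  set m := ∫ y, y ∂P
  have hinner : ∀ u : E, Integrable (fun y => ⟪u, y⟫) P := fun u => hP.const_inner u
  have hmad : ∀ u z : E, ∫ y, |⟪u, y - z⟫| ∂P = ∫ y, |⟪u, y⟫ - ⟪u, z⟫| ∂P := fun u z => by
    simp only [inner_sub_right]
  have hcont : Continuous fun u : E => ∫ y, |⟪u, y - m⟫| ∂P := by
    refine (lipschitzWith_integral (G := fun y => ‖y - m‖)
      (fun u => ((hP.sub (integrable_const m)).const_inner u).abs)
      (hP.sub (integrable_const m)).norm fun u v y => ?_).continuous
    rw [dist_eq_norm, mul_comm]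
    refine (abs_abs_sub_abs_le_abs_sub _ _).trans ?_
    rw [← inner_sub_left]
    exact abs_real_inner_le_norm _ _
  obtain ⟨δ, hδ, hδle⟩ := (isCompact_sphere (0 : E) 1).exists_forall_le' hcont.continuousOn
    (a := 0) fun u hu => by
      rw [hmad]
      exact integral_abs_sub_const_pos (hinner u) (hP1 u (mem_sphere_zero_iff_norm.mp hu) _)
  refine ⟨δ / 2, half_pos hδ, fun z u hu => ?_⟩
  have hdev := integral_abs_sub_integral_le (hinner u) ⟪u, z⟫
  rw [integral_inner hP, ← hmad, ← hmad] at hdev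
  linarith [hδle u (mem_sphere_zero_iff_norm.mpr hu)]

theorem lipschitzWith_eOut (hP : Integrable (fun y : E => y) P) {u : E} (hu : ‖u‖ = 1)
    {δ : ℝ≥0} (hδ : 0 < δ) (hδle : ∀ z, δ ≤ ∫ y, |⟪u, y - z⟫| ∂P) :
    LipschitzWith (2 / δ) (fun z => eOut P z u) := by
  have habs : LipschitzWith 1 fun r : ℝ => |r| := LipschitzWith.of_dist_le_mul fun r s => by
    simpa only [Real.dist_eq, NNReal.coe_one, one_mul] using abs_abs_sub_abs_le_abs_sub r s
  have hnum := lipschitzWith_integral_comp_inner_sub lipschitzWith_negPart negPart_zero hP hu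
  have hden := lipschitzWith_integral_comp_inner_sub habs abs_zero hP hu
  simp_rw [eOut_eq]
  refine mul_one (2 : ℝ≥0) ▸ hnum.div_of_nonneg_of_le hden
    (fun z => integral_nonneg fun _ => negPart_nonneg _) (fun z => ?_) hδ hδle
  refine integral_mono (integrable_comp_inner_sub lipschitzWith_negPart negPart_zero hP u z)
    (integrable_comp_inner_sub habs abs_zero hP u z) fun y => ?_
  rw [← posPart_add_negPart]
  exact le_add_of_nonneg_left (posPart_nonneg _)

theorem exists_lipschitzWith_EDepth [FiniteDimensional ℝ E]
    (hP : Integrable (fun y : E => y) P)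
    (hP1 : ∀ u : E, ‖u‖ = 1 → ∀ c : ℝ, P {y | ⟪u, y⟫ = c} < 1) :
    ∃ K, LipschitzWith K (EDepth P) := by
  obtain ⟨δ, hδ, hδle⟩ := exists_pos_le_integral_abs_inner_sub hP hP1
  lift δ to ℝ≥0 using hδ.le
  exact ⟨_, LipschitzWith.ciInf
    (fun u => lipschitzWith_eOut hP u.2 (by exact_mod_cast hδ) fun z => hδle z u u.2)
    fun z => ⟨0, by rintro _ ⟨u, rfl⟩; exact eOut_nonneg P z u⟩⟩

end Outlyingness

theorem convexOn_negPart_sub (c : ℝ) : ConvexOn ℝ univ fun t : ℝ => (c - t)⁻ := by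
  refine (((convexOn_id (𝕜 := ℝ) convex_univ).sub (concaveOn_const c convex_univ)).sup
    (convexOn_const 0 convex_univ)).congr fun t _ => ?_
  simp [negPart_def]

theorem min_eq_sub_posPart_sub {α : Type*} [AddCommGroup α] [LinearOrder α] [IsOrderedAddMonoid α]
    (a b : α) : min a b = a - (a - b)⁺ :=
  inf_eq_sub_posPart_sub a b

section Line

variable (Q : Measure ℝ)

theorem EDepth_real_eq_min (t : ℝ) : EDepth Q t = min (eOut Q t 1) (eOut Q t (-1)) := by
  have hbdd : BddBelow (range fun u : {u : ℝ // ‖u‖ = 1} => eOut Q t u.1) :=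
    ⟨0, by rintro _ ⟨u, rfl⟩; exact eOut_nonneg Q t u⟩
  refine le_antisymm (le_min (ciInf_le hbdd ⟨1, by simp⟩) (ciInf_le hbdd ⟨-1, by simp⟩)) ?_
  have : Nonempty {u : ℝ // ‖u‖ = 1} := ⟨⟨1, by simp⟩⟩
  refine le_ciInf fun ⟨u, hu⟩ => ?_
  rcases (abs_eq zero_le_one).mp (by rwa [Real.norm_eq_abs] at hu) with rfl | rfl
  · exact min_le_left _ _
  · exact min_le_right _ _

theorem EDepth_real_eq [IsProbabilityMeasure Q] (hQ : Integrable (fun y : ℝ => y) Q) (t : ℝ) :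
    EDepth Q t = ((∫ y, (y - t)⁻ ∂Q) - ((∫ y, y ∂Q) - t)⁻) / ∫ y, |y - t| ∂Q := by
  have hpos : Integrable (fun y => (y - t)⁺) Q := (hQ.sub (integrable_const t)).pos_part
  have hneg : Integrable (fun y => (y - t)⁻) Q := (hQ.sub (integrable_const t)).neg_part
  have hdiff : (∫ y, (y - t)⁻ ∂Q) - ∫ y, (y - t)⁺ ∂Q = t - ∫ y, y ∂Q := by
    rw [← integral_sub hneg hpos]
    simp only [negPart_sub_posPart, neg_sub]
    rw [integral_sub (integrable_const t) hQ, integral_const, probReal_univ, one_smul]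
  rw [EDepth_real_eq_min, eOut_eq, eOut_eq]
  simp only [RCLike.inner_apply, Real.ringHom_apply, mul_one, mul_neg, negPart_neg, abs_neg]
  rw [min_div_div_right (integral_nonneg fun _ => abs_nonneg _), min_eq_sub_posPart_sub, hdiff,
    ← neg_sub (∫ y, y ∂Q) t, posPart_neg]

variable [IsProbabilityMeasure Q] {Q}

theorem convexOn_integral_negPart_sub (hQ : Integrable (fun y : ℝ => y) Q) :
    ConvexOn ℝ univ fun t => ∫ y, (y - t)⁻ ∂Q :=
  integral_convexOn_of_integrand_ae convex_univ (ae_of_all _ convexOn_negPart_sub)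
    fun t _ => (hQ.sub (integrable_const t)).neg_part

theorem convexOn_integral_abs_sub (hQ : Integrable (fun y : ℝ => y) Q) :
    ConvexOn ℝ univ fun t => ∫ y, |y - t| ∂Q :=
  integral_convexOn_of_integrand_ae convex_univ
    (ae_of_all _ fun y => by simpa [Real.dist_eq, abs_sub_comm] using convexOn_univ_dist y)
    fun t _ => (hQ.sub (integrable_const t)).abs

theorem differentiableWithinAt_EDepth_real (hQ : Integrable (fun y : ℝ => y) Q)
    (hQ1 : ∀ c : ℝ, Q {c} < 1) {s : Set ℝ} {z : ℝ}
    (hs : ∀ f : ℝ → ℝ, ConvexOn ℝ univ f → DifferentiableWithinAt ℝ f s z) :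
    DifferentiableWithinAt ℝ (EDepth Q) s z := by
  have hD : 0 < ∫ y, |y - z| ∂Q := integral_abs_sub_const_pos hQ (by simpa using hQ1 z)
  rw [funext (EDepth_real_eq Q hQ)]
  exact ((hs _ (convexOn_integral_negPart_sub hQ)).sub (hs _ (convexOn_negPart_sub _))).div
    (hs _ (convexOn_integral_abs_sub hQ)) hD.ne'

end Line

theorem stmt_16_general {d : ℕ}
    (P : Measure (EuclideanSpace ℝ (Fin d))) [IsProbabilityMeasure P]
    (hmom : Integrable (fun y : EuclideanSpace ℝ (Fin d) => y) P)
    (hP1 : ∀ u : EuclideanSpace ℝ (Fin d), ‖u‖ = 1 → ∀ c : ℝ, P {z | ⟪u, z⟫ = c} < 1)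
    (Q : Measure ℝ) [IsProbabilityMeasure Q]
    (hQmom : Integrable (fun y : ℝ => y) Q)
    (hQ1 : ∀ c : ℝ, Q {c} < 1) :
    UniformContinuous (fun z => EDepth P z) ∧
    ∀ z : ℝ,
      (∃ L : ℝ, HasDerivWithinAt (fun t : ℝ => EDepth Q t) L (Set.Iio z) z) ∧
      (∃ L : ℝ, HasDerivWithinAt (fun t : ℝ => EDepth Q t) L (Set.Ioi z) z) := by
  obtain ⟨K, hK⟩ := exists_lipschitzWith_EDepth hmom hP1
  refine ⟨hK.uniformContinuous, fun z => ⟨?_, ?_⟩⟩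
  · exact ⟨_, (differentiableWithinAt_EDepth_real hQmom hQ1 fun f hf =>
      hf.differentiableWithinAt_Iio_of_mem_interior (by simp)).hasDerivWithinAt⟩
  · exact ⟨_, (differentiableWithinAt_EDepth_real hQmom hQ1 fun f hf =>
      hf.differentiableWithinAt_Ioi_of_mem_interior (by simp)).hasDerivWithinAt⟩

theorem stmt_16 {d : ℕ} (hd : 0 < d)
    (P : Measure (EuclideanSpace ℝ (Fin d))) [IsProbabilityMeasure P]
    (hmom : Integrable (fun y : EuclideanSpace ℝ (Fin d) => y) P)
    (hP1 : ∀ u : EuclideanSpace ℝ (Fin d), ‖u‖ = 1 → ∀ c : ℝ, P {z | ⟪u, z⟫ = c} < 1)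
    (Q : Measure ℝ) [IsProbabilityMeasure Q]
    (hQmom : Integrable (fun y : ℝ => y) Q)
    (hQ1 : ∀ c : ℝ, Q {c} < 1) :
    UniformContinuous (fun z => EDepth P z) ∧
    ∀ z : ℝ,
      (∃ L : ℝ, HasDerivWithinAt (fun t : ℝ => EDepth Q t) L (Set.Iio z) z) ∧
      (∃ L : ℝ, HasDerivWithinAt (fun t : ℝ => EDepth Q t) L (Set.Ioi z) z) :=
  stmt_16_general P hmom hP1 Q hQmom hQ1
end
end
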